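/- With v a formal variable, q = v^2, and L_{-2} the ℤ[v^{±1}]-linear map on ℤ[v^{±1}][x^{±1}] sending x^a ↦ v^{a^2} (i.e., q^{a^2/2}), one has L_{-2}((x;q)_{k+1}(x^{-1};q)_{k+1}) = 2(1-v)·(-v^2;-v)_{2k}, where (-v^2;-v)_{2k} = ∏_{i=2}^{2k+1}(1+(-v)^i). -/

import Mathlib

open Finset LaurentPolynomial

noncomputable section

/-- `ℤ[v^{±1}]`. -/
abbrev Lv : Type := LaurentPolynomial ℤ

/-- `ℤ[v^{±1}][x^{±1}]`. -/
abbrev Lvx : Type := LaurentPolynomial Lv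

/-- The `ℤ[v^{±1}]`-linear Laplace transform on `ℤ[v^{±1}][x^{±1}]`, `x^a ↦ e a`. -/
def laplace (e : ℤ → Lv) (F : Lvx) : Lv :=
  Finsupp.sum F.coeff fun a c => c * e a

/-- `F_k(x,q) = (x;q)_{k+1} (x^{-1};q)_{k+1}` with `q = v^2`. -/
def Fk (k : ℕ) : Lvx :=
  (∏ i ∈ range (k + 1), (1 - C ((T 2 : Lv) ^ i) * T 1)) *
    ∏ i ∈ range (k + 1), (1 - C ((T 2 : Lv) ^ i) * T (-1))

/-- `(-v^2;-v)_{2k} = ∏_{i=2}^{2k+1} (1 + (-v)^i)`. -/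
def mvPoch (k : ℕ) : Lv :=
  ∏ i ∈ range (2 * k), (1 + (-(T 1 : Lv)) ^ (i + 2))

set_option maxRecDepth 8000

/-! ### Laplace transform API -/

lemma laplace_single (e : ℤ → Lv) (a : ℤ) (c : Lv) :
    laplace e (AddMonoidAlgebra.single a c : Lvx) = c * e a := by
  rw [laplace, AddMonoidAlgebra.coeff_single, Finsupp.sum_single_index]; exact zero_mul _

lemma laplace_zero (e : ℤ → Lv) : laplace e 0 = 0 := by simp [laplace]

lemma laplace_add (e : ℤ → Lv) (F G : Lvx) :
    laplace e (F + G) = laplace e F + laplace e G := by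
  unfold laplace
  rw [AddMonoidAlgebra.coeff_add]
  exact Finsupp.sum_add_index' (fun a => zero_mul _) (fun a b c => add_mul _ _ _)

lemma laplace_neg (e : ℤ → Lv) (F : Lvx) : laplace e (-F) = - laplace e F := by
  have h : laplace e F + laplace e (-F) = 0 := by
    rw [← laplace_add]; simp [laplace_zero]
  exact eq_neg_of_add_eq_zero_right h

lemma laplace_sub (e : ℤ → Lv) (F G : Lvx) :
    laplace e (F - G) = laplace e F - laplace e G := by
  rw [sub_eq_add_neg, laplace_add, laplace_neg, sub_eq_add_neg]

lemma laplace_C_mul_T (e : ℤ → Lv) (c : Lv) (j : ℤ) :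
    laplace e (C c * T j) = c * e j := by
  rw [← single_eq_C_mul_T, laplace_single]

lemma laplace_one (e : ℤ → Lv) : laplace e 1 = e 0 := by
  have : (1 : Lvx) = C 1 * T 0 := by simp
  rw [this, laplace_C_mul_T, one_mul]

lemma laplace_T (e : ℤ → Lv) (j : ℤ) : laplace e (T j) = e j := by
  have : (T j : Lvx) = C 1 * T j := by simp
  rw [this, laplace_C_mul_T, one_mul]

lemma laplace_C_mul (e : ℤ → Lv) (c : Lv) (F : Lvx) :
    laplace e (C c * F) = c * laplace e F := by
  induction F using LaurentPolynomial.induction_on' with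
  | add p q hp hq => rw [mul_add, laplace_add, laplace_add, hp, hq, mul_add]
  | C_mul_T n a =>
    rw [← mul_assoc, ← map_mul, laplace_C_mul_T, laplace_C_mul_T, mul_assoc]

lemma laplace_mul_T (e : ℤ → Lv) (F : Lvx) (j : ℤ) :
    laplace e (F * T j) = laplace (fun a => e (a + j)) F := by
  induction F using LaurentPolynomial.induction_on' with
  | add p q hp hq => rw [add_mul, laplace_add, laplace_add, hp, hq]
  | C_mul_T n a =>
    rw [mul_assoc, ← T_add, laplace_C_mul_T, laplace_C_mul_T]

lemma laplace_shift (F : Lvx) (m j : ℤ) :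
    laplace (fun a => T ((a+m)^2)) (F * T j) = laplace (fun a => T ((a+(m+j))^2)) F := by
  rw [laplace_mul_T]
  congr 1
  funext a
  congr 1
  ring

/-! ### The auxiliary family `p` -/

def p : ℕ → ℕ → Lv
  | 0, _ => 2
  | 1, n => T (2*(n:ℤ)) * (1 + T 1) + T 1 - 1
  | 2, n => (T 2 + T (2*(n:ℤ)) + T (2*(n:ℤ)) * T 3) * p 1 n
      - (T (2*(n:ℤ)) * T 2 + T 3 + T (2*(n:ℤ)) * T 1) * p 0 n + T 1 * p 1 n
  | m+3, n => (T 2 + T (2*(n:ℤ)) + T (2*(n:ℤ)) * T (2*(m:ℤ)+5)) * p (m+2) n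
      - (T (2*(n:ℤ)) * T 2 + T (2*(m:ℤ)+5) + T (2*(n:ℤ)) * T (2*(m:ℤ)+3)) * p (m+1) n
      + T (2*(m:ℤ)+3) * p m n

lemma p0 (n : ℕ) : p 0 n = 2 := rfl
lemma p1 (n : ℕ) : p 1 n = T (2*(n:ℤ)) * (1 + T 1) + T 1 - 1 := rfl
lemma p2 (n : ℕ) : p 2 n = (T 2 + T (2*(n:ℤ)) + T (2*(n:ℤ)) * T 3) * p 1 n
      - (T (2*(n:ℤ)) * T 2 + T 3 + T (2*(n:ℤ)) * T 1) * p 0 n + T 1 * p 1 n := rfl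
lemma p3 (m n : ℕ) : p (m+3) n = (T 2 + T (2*(n:ℤ)) + T (2*(n:ℤ)) * T (2*(m:ℤ)+5)) * p (m+2) n
      - (T (2*(n:ℤ)) * T 2 + T (2*(m:ℤ)+5) + T (2*(n:ℤ)) * T (2*(m:ℤ)+3)) * p (m+1) n
      + T (2*(m:ℤ)+3) * p m n := rfl

lemma p_rec (m n : ℕ) : p (m+2) n
    = (T 2 + T (2*(n:ℤ)) + T (2*(n:ℤ)) * T (2*(m:ℤ)+3)) * p (m+1) n
      - (T (2*(n:ℤ)) * T 2 + T (2*(m:ℤ)+3) + T (2*(n:ℤ)) * T (2*(m:ℤ)+1)) * p m n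
      + T (2*(m:ℤ)+1) * p (((m:ℤ)-1).natAbs) n := by
  cases m with
  | zero =>
    rw [p2, show 2*((0:ℕ):ℤ)+3 = 3 by norm_num, show 2*((0:ℕ):ℤ)+1 = 1 by norm_num,
      show ((((0:ℕ):ℤ))-1).natAbs = 1 by norm_num]
  | succ m =>
    rw [show m+1+2 = m+3 from rfl, p3,
      show 2*(((m+1:ℕ)):ℤ)+3 = 2*(m:ℤ)+5 by push_cast; ring,
      show 2*(((m+1:ℕ)):ℤ)+1 = 2*(m:ℤ)+3 by push_cast; ring,
      show (((m+1:ℕ)):ℤ)-1 = ((m:ℕ):ℤ) by push_cast; ring, Int.natAbs_natCast]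

lemma lemA : ∀ m : ℕ, (1 - T 1) * p m 1 * T (2*(m:ℤ))
    = T ((m:ℤ)^2) * (2 * T (2*(m:ℤ)) - T (2*(m:ℤ))^2 * T 1 - T 1)
  | 0 => by
    rw [p0, show 2*((0:ℕ):ℤ) = 0 by norm_num, show (((0:ℕ):ℤ))^2 = 0 by norm_num, T_zero]; ring
  | 1 => by
    have h2 : (T 2 : Lv) = T 1 * T 1 := by rw [← T_add]; norm_num
    rw [p1, show 2*((1:ℕ):ℤ) = 2 by norm_num, show (((1:ℕ):ℤ))^2 = 1 by norm_num, h2]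
    ring
  | 2 => by
    have h2 : (T 2 : Lv) = T 1 * T 1 := by rw [← T_add]; norm_num
    have h3 : (T 3 : Lv) = T 1 * T 1 * T 1 := by rw [← T_add, ← T_add]; norm_num
    have h4 : (T 4 : Lv) = T 1 * T 1 * T 1 * T 1 := by rw [← T_add, ← T_add, ← T_add]; norm_num
    rw [p2, p1, p0, show 2*((2:ℕ):ℤ) = 4 by norm_num, show (((2:ℕ):ℤ))^2 = 4 by norm_num,
      show 2*((1:ℕ):ℤ) = 2 by norm_num, h2, h3, h4]
    ring
  | (m+3) => by
    have h0 := lemA m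
    have h1 := lemA (m+1)
    have h2 := lemA (m+2)
    rw [p3]
    push_cast at h0 h1 h2 ⊢
    have e1 : (T (2*((m:ℤ)+1)) : Lv) = T (2*(m:ℤ)) * T 1 * T 1 := by
      rw [show 2*((m:ℤ)+1) = 2*(m:ℤ)+1+1 by ring]; simp only [T_add]
    have e2 : (T (2*((m:ℤ)+2)) : Lv) = T (2*(m:ℤ)) * (T 1)^4 := by
      rw [show 2*((m:ℤ)+2) = 2*(m:ℤ)+1+1+1+1 by ring]; simp only [T_add]; ring
    have e3 : (T (2*((m:ℤ)+3)) : Lv) = T (2*(m:ℤ)) * (T 1)^6 := by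
      rw [show 2*((m:ℤ)+3) = 2*(m:ℤ)+1+1+1+1+1+1 by ring]; simp only [T_add]; ring
    have f1 : (T (((m:ℤ)+1)^2) : Lv) = T ((m:ℤ)^2) * T (2*(m:ℤ)) * T 1 := by
      rw [show ((m:ℤ)+1)^2 = (m:ℤ)^2 + 2*(m:ℤ) + 1 by ring]; simp only [T_add]
    have f2 : (T (((m:ℤ)+2)^2) : Lv) = T ((m:ℤ)^2) * T (2*(m:ℤ)) * T (2*(m:ℤ)) * (T 1)^4 := by
      rw [show ((m:ℤ)+2)^2 = (m:ℤ)^2 + 2*(m:ℤ) + 2*(m:ℤ) + 1+1+1+1 by ring]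
      simp only [T_add]; ring
    have f3 : (T (((m:ℤ)+3)^2) : Lv)
        = T ((m:ℤ)^2) * T (2*(m:ℤ)) * T (2*(m:ℤ)) * T (2*(m:ℤ)) * (T 1)^9 := by
      rw [show ((m:ℤ)+3)^2 = (m:ℤ)^2 + 2*(m:ℤ) + 2*(m:ℤ) + 2*(m:ℤ) + 1+1+1+1+1+1+1+1+1 by ring]
      simp only [T_add]; ring
    have g5 : (T (2*(m:ℤ)+5) : Lv) = T (2*(m:ℤ)) * (T 1)^5 := by
      rw [show 2*(m:ℤ)+5 = 2*(m:ℤ)+1+1+1+1+1 by ring]; simp only [T_add]; ring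
    have g3 : (T (2*(m:ℤ)+3) : Lv) = T (2*(m:ℤ)) * (T 1)^3 := by
      rw [show 2*(m:ℤ)+3 = 2*(m:ℤ)+1+1+1 by ring]; simp only [T_add]; ring
    have h2' : (T 2 : Lv) = T 1 * T 1 := by rw [← T_add]; norm_num
    rw [e1, f1] at h1
    rw [e2, f2] at h2
    rw [e3, f3, g5, g3, h2']
    linear_combination (2*(T 1:Lv)^4 + (T 1:Lv)^9 * T (2*(m:ℤ))) * h2
      - ((T 1:Lv)^8 + 2*(T 1:Lv)^9 * T (2*(m:ℤ))) * h1 + ((T 1:Lv)^9 * T (2*(m:ℤ))) * h0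

lemma lemB : ∀ (j n : ℕ), (1 + T (2*(n:ℤ))) * (1 - T 1 * T (2*(n:ℤ))) * p j (n+1)
    = (1 + T (2*(n:ℤ)) * T (2*(n:ℤ))) * p j n
      - T (2*(n:ℤ)) * (p (j+1) n + p (((j:ℤ)-1).natAbs) n)
  | 0, n => by
    rw [show ((((0:ℕ):ℤ))-1).natAbs = 1 by norm_num, show (0:ℕ)+1 = 1 from rfl]
    simp only [p0, p1]
    ring
  | 1, n => by
    have h2' : (T 2 : Lv) = T 1 * T 1 := by rw [← T_add]; norm_num
    have h3' : (T 3 : Lv) = T 1 * T 1 * T 1 := by rw [← T_add, ← T_add]; norm_num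
    rw [show ((((1:ℕ):ℤ))-1).natAbs = 0 by norm_num, show (1:ℕ)+1 = 2 from rfl]
    simp only [p2, p1, p0]
    rw [show 2*(((n+1:ℕ)):ℤ) = 2*(n:ℤ)+1+1 by push_cast; ring]
    rw [h2', h3']
    simp only [T_add]; ring
  | 2, n => by
    have h2' : (T 2 : Lv) = T 1 * T 1 := by rw [← T_add]; norm_num
    have h3' : (T 3 : Lv) = T 1 * T 1 * T 1 := by rw [← T_add, ← T_add]; norm_num
    have h5' : (T 5 : Lv) = T 1 * T 1 * T 1 * T 1 * T 1 := by
      rw [← T_add, ← T_add, ← T_add, ← T_add]; norm_num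
    rw [show ((((2:ℕ):ℤ))-1).natAbs = 1 by norm_num, show (2:ℕ)+1 = 0+3 from rfl]
    simp only [p3, zero_add, p2, p1, p0]
    rw [show 2*((0:ℕ):ℤ)+5 = 5 by norm_num, show 2*((0:ℕ):ℤ)+3 = 3 by norm_num]
    rw [show 2*(((n+1:ℕ)):ℤ) = 2*(n:ℤ)+1+1 by push_cast; ring]
    rw [h2', h3', h5']
    simp only [T_add]; ring
  | (m+3), n => by
    have h0 := lemB m n
    have h1 := lemB (m+1) n
    have h2 := lemB (m+2) n
    have R' := p_rec (m+1) (n+1)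
    have Rn2 := p_rec (m+2) n
    have Rn1 := p_rec (m+1) n
    have Rn0 := p_rec m n
    rw [show m+1+2 = m+3 from rfl] at R' Rn1
    push_cast at h0 h1 h2 R' Rn2 Rn1 Rn0 ⊢
    rw [show ((m:ℤ)+1-1).natAbs = m by omega] at h1 R' Rn1
    rw [show ((m:ℤ)+2-1).natAbs = m+1 by omega] at h2 Rn2
    rw [show ((m:ℤ)+3-1).natAbs = m+2 by omega]
    have q2 : (T (2*((n:ℤ)+1)) : Lv) = T (2*(n:ℤ)) * T 1 * T 1 := by
      rw [show 2*((n:ℤ)+1) = 2*(n:ℤ)+1+1 by ring]; simp only [T_add]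
    have w3 : (T (2*((m:ℤ)+1)+1) : Lv) = T (2*(m:ℤ)+1) * (T 1)^2 := by
      rw [show 2*((m:ℤ)+1)+1 = 2*(m:ℤ)+1+1+1 by ring]; simp only [T_add]; ring
    have w5 : (T (2*((m:ℤ)+1)+3) : Lv) = T (2*(m:ℤ)+1) * (T 1)^4 := by
      rw [show 2*((m:ℤ)+1)+3 = 2*(m:ℤ)+1+1+1+1+1 by ring]; simp only [T_add]; ring
    have w5b : (T (2*((m:ℤ)+2)+1) : Lv) = T (2*(m:ℤ)+1) * (T 1)^4 := by
      rw [show 2*((m:ℤ)+2)+1 = 2*(m:ℤ)+1+1+1+1+1 by ring]; simp only [T_add]; ring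
    have w7 : (T (2*((m:ℤ)+2)+3) : Lv) = T (2*(m:ℤ)+1) * (T 1)^6 := by
      rw [show 2*((m:ℤ)+2)+3 = 2*(m:ℤ)+1+1+1+1+1+1+1 by ring]; simp only [T_add]; ring
    have g3 : (T (2*(m:ℤ)+3) : Lv) = T (2*(m:ℤ)+1) * (T 1)^2 := by
      rw [show 2*(m:ℤ)+3 = 2*(m:ℤ)+1+1+1 by ring]; simp only [T_add]; ring
    have h2' : (T 2 : Lv) = T 1 * T 1 := by rw [← T_add]; norm_num
    rw [q2, w3, w5, h2'] at R'
    rw [w5b, w7, h2'] at Rn2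
    rw [w3, w5, h2'] at Rn1
    rw [g3, h2'] at Rn0
    linear_combination ((1 + T (2*(n:ℤ))) * (1 - T 1 * T (2*(n:ℤ)))) * R'
      + (((T 1:Lv))^2 + (T 1:Lv)^2 * T (2*(n:ℤ)) + (T 1:Lv)^6 * T (2*(n:ℤ)) * T (2*(m:ℤ)+1)) * h2
      - ((T 1:Lv)^4 * T (2*(n:ℤ)) + (T 1:Lv)^4 * T (2*(m:ℤ)+1)
          + (T 1:Lv)^4 * T (2*(n:ℤ)) * T (2*(m:ℤ)+1)) * h1
      + ((T 1:Lv)^2 * T (2*(m:ℤ)+1)) * h0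
      + T (2*(n:ℤ)) * Rn2
      + (-1 - (T 1:Lv)^2 * T (2*(n:ℤ))^2) * Rn1
      + ((T 1:Lv)^2 * T (2*(n:ℤ))) * Rn0

lemma lemA' (j : ℕ) : 2 * T ((j:ℤ)^2) - T (((j:ℤ)+1)^2) - T (((j:ℤ)-1)^2) = (1 - T 1) * p j 1 := by
  apply mul_right_cancel₀ (a := _) (b := (T (2*(j:ℤ)) : Lv)) ((isUnit_T _).ne_zero)
  have hA := lemA j
  have fp : (T (((j:ℤ)+1)^2) : Lv) * T (2*(j:ℤ)) = T ((j:ℤ)^2) * T (2*(j:ℤ)) * T (2*(j:ℤ)) * T 1 := by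
    simp only [← T_add]; congr 1; ring
  have fm : (T (((j:ℤ)-1)^2) : Lv) * T (2*(j:ℤ)) = T ((j:ℤ)^2) * T 1 := by
    simp only [← T_add]; congr 1; ring
  linear_combination -hA - fp - fm

lemma lemBZ (n : ℕ) (m : ℤ) : (1 + T (2*(n:ℤ))) * (1 - T 1 * T (2*(n:ℤ))) * p m.natAbs (n+1)
    = (1 + T (2*(n:ℤ)) * T (2*(n:ℤ))) * p m.natAbs n
      - T (2*(n:ℤ)) * (p (m+1).natAbs n + p (m-1).natAbs n) := by
  obtain ⟨j, rfl | rfl⟩ := Int.eq_nat_or_neg m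
  · have h := lemB j n
    rw [show ((j:ℤ)).natAbs = j by omega, show ((j:ℤ)+1).natAbs = j+1 by omega]
    exact h
  · cases j with
    | zero =>
      have h := lemB 0 n
      rw [show ((((0:ℕ):ℤ))-1).natAbs = 1 by norm_num, show (0:ℕ)+1 = 1 from rfl] at h
      rw [show (-((0:ℕ):ℤ)).natAbs = 0 by norm_num, show (-((0:ℕ):ℤ)+1).natAbs = 1 by norm_num,
        show (-((0:ℕ):ℤ)-1).natAbs = 1 by norm_num]
      linear_combination h
    | succ i =>
      have h := lemB (i+1) n
      rw [show (((i+1:ℕ)):ℤ)-1 = ((i:ℕ):ℤ) by push_cast; ring, Int.natAbs_natCast] at h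
      rw [show (-((i+1:ℕ):ℤ)).natAbs = i+1 by omega,
        show (-((i+1:ℕ):ℤ)+1).natAbs = i by omega,
        show (-((i+1:ℕ):ℤ)-1).natAbs = i+2 by omega,
        show (i:ℕ)+1+1 = i+2 from rfl]
      rw [show (i:ℕ)+1+1 = i+2 from rfl] at h
      linear_combination h

lemma Fk_zero : Fk 0 = 2 - T 1 - T (-1) := by
  have hT : (T 1 : Lvx) * T (-1) = 1 := by rw [← T_add]; norm_num [T_zero]
  simp only [Fk, zero_add, range_one, prod_singleton, pow_zero, map_one, one_mul]
  linear_combination (1 : Lvx) * hT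

lemma mvPoch_zero : mvPoch 0 = 1 := by simp [mvPoch]

lemma mvPoch_succ (k : ℕ) : mvPoch (k+1)
    = mvPoch k * ((1 + T (2*(k:ℤ)+2)) * (1 - T (2*(k:ℤ)+3))) := by
  have he : (-(T 1:Lv))^(2*k+2) = T (2*(k:ℤ)+2) := by
    rw [Even.neg_pow ⟨k+1, by ring⟩, T_pow]
    congr 1; push_cast; ring
  have ho : (-(T 1:Lv))^(2*k+1+2) = - T (2*(k:ℤ)+3) := by
    rw [Odd.neg_pow ⟨k+1, by ring⟩, T_pow]
    congr 2; push_cast; ring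
  rw [mvPoch, mvPoch, show 2*(k+1) = 2*k+1+1 by ring, prod_range_succ, prod_range_succ,
    he, ho]
  ring

lemma laplace_Fk (k : ℕ) : ∀ m : ℤ, laplace (fun a => T ((a+m)^2)) (Fk k)
    = (1 - T 1) * p m.natAbs (k+1) * mvPoch k := by
  induction k with
  | zero =>
    intro m
    have h2 : (2 : Lvx) = 1 + 1 := by norm_num
    rw [Fk_zero, laplace_sub, laplace_sub, laplace_T, laplace_T, h2, laplace_add, laplace_one,
      mvPoch_zero, mul_one]
    obtain ⟨j, rfl | rfl⟩ := Int.eq_nat_or_neg m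
    · rw [show ((0:ℤ)+(j:ℤ))^2 = (j:ℤ)^2 by ring, show ((1:ℤ)+(j:ℤ))^2 = ((j:ℤ)+1)^2 by ring,
        show ((-1:ℤ)+(j:ℤ))^2 = ((j:ℤ)-1)^2 by ring, show ((j:ℤ)).natAbs = j by omega]
      linear_combination lemA' j
    · rw [show ((0:ℤ)+ -(j:ℤ))^2 = (j:ℤ)^2 by ring, show ((1:ℤ)+ -(j:ℤ))^2 = ((j:ℤ)-1)^2 by ring,
        show ((-1:ℤ)+ -(j:ℤ))^2 = ((j:ℤ)+1)^2 by ring, show (-(j:ℤ)).natAbs = j by omega]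
      linear_combination lemA' j
  | succ k ih =>
    intro m
    have hT : (T 1 : Lvx) * T (-1) = 1 := by rw [← T_add]; norm_num [T_zero]
    have hsplit : Fk (k+1) = Fk k + C ((T 2:Lv)^(k+1) * (T 2:Lv)^(k+1)) * Fk k
        - C ((T 2:Lv)^(k+1)) * (Fk k * T 1) - C ((T 2:Lv)^(k+1)) * (Fk k * T (-1)) := by
      have h1 : Fk (k+1)
          = Fk k * ((1 - C ((T 2:Lv)^(k+1)) * T 1) * (1 - C ((T 2:Lv)^(k+1)) * T (-1))) := by
        rw [Fk, Fk]; simp only [prod_range_succ]; ring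
      have hCC : (C ((T 2:Lv)^(k+1) * (T 2:Lv)^(k+1)) : Lvx)
          = C ((T 2:Lv)^(k+1)) * C ((T 2:Lv)^(k+1)) := map_mul _ _ _
      rw [h1, hCC]
      linear_combination (Fk k * C ((T 2:Lv)^(k+1)) * C ((T 2:Lv)^(k+1))) * hT
    rw [hsplit, laplace_sub, laplace_sub, laplace_add, laplace_C_mul, laplace_C_mul,
      laplace_C_mul, laplace_shift, laplace_shift, show m + (-1:ℤ) = m - 1 by ring,
      ih m, ih (m+1), ih (m-1), mvPoch_succ]
    have hc : ((T 2:Lv)^(k+1)) = T (2*(k:ℤ)+2) := by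
      rw [T_pow]; congr 1; push_cast; ring
    have hq : (T (2*(k:ℤ)+3) : Lv) = T 1 * T (2*(k:ℤ)+2) := by
      rw [← T_add]; congr 1; ring
    have hB := lemBZ (k+1) m
    rw [show 2*(((k+1:ℕ)):ℤ) = 2*(k:ℤ)+2 by push_cast; ring] at hB
    rw [hc, hq]
    linear_combination (-(1 - T 1) * mvPoch k) * hB

/-- Lemma 3.3 (`b = -2` case): with `q = v^2` and `L_{-2}` sending `x^a ↦ v^{a^2}`,
`L_{-2}((x;q)_{k+1}(x^{-1};q)_{k+1}) = 2 (1-v) (-v^2;-v)_{2k}`. -/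
theorem laplace_neg_two_Fk (k : ℕ) :
    laplace (fun a => T (a ^ 2)) (Fk k) = 2 * (1 - T 1) * mvPoch k := by
  have h := laplace_Fk k 0
  rw [show ((0:ℤ)).natAbs = 0 from rfl, p0] at h
  have he : (fun a : ℤ => (T (a ^ 2) : Lv)) = (fun a : ℤ => T ((a+0)^2)) := by
    funext a; congr 1; ring
  rw [he, h]
  ring

end
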